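/- arXiv:1602.03996 — 7 statements merged into one kernel-verified Lean document; each statement's English description precedes it below -/
import Mathlib

section
/- Let (S,Σ) be a measurable space and let (μ_α)_{α∈Λ} be a nonempty family of measures on (S,Σ). Then for every measurable set A ∈ Σ, the supremum measure satisfies (⨆_{α∈Λ} μ_α)(A) = sup { Σ_{n=1}^N sup_{α∈Λ} μ_α(A_n) : N ≥ 1, A_1,…,A_N ∈ Σ pairwise disjoint with A = ⋃_{n=1}^N A_n }, where all values are taken in [0,∞]. -/
/-!
Let `ν A` be the supremum of `∑ₙ ⨆ α, μ α (Bₙ)` over finite measurable partitions `(Bₙ)` of `A`.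
Every such sum is at most `(⨆ α, μ α) A`, since the supremum measure dominates each `μ α` and is
additive. Conversely, `ν` is itself a measure: merging partitions of disjoint sets makes it
superadditive, and splitting a partition of `⋃ i, f i` along the `f i` makes it countably
subadditive. As the one-piece partition gives `μ α ≤ ν` for every `α`, also `⨆ α, μ α ≤ ν`.
-/

open MeasureTheory
open scoped ENNReal

namespace MeasureTheory.Measure

variable {S : Type*} [MeasurableSpace S] {Λ : Type*} (μ : Λ → Measure S)

def partitionSums (A : Set S) : Set ℝ≥0∞ :=
  {x : ℝ≥0∞ | ∃ (N : ℕ) (B : Fin (N + 1) → Set S),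
    (∀ n, MeasurableSet (B n)) ∧ Pairwise (Function.onFun Disjoint B) ∧
    (⋃ n, B n) = A ∧ x = ∑ n, ⨆ α, μ α (B n)}

lemma sum_mem_partitionSums {A : Set S} {ι : Type*} [Fintype ι] [Nonempty ι]
    (B : ι → Set S) (hm : ∀ n, MeasurableSet (B n)) (hd : Pairwise (Function.onFun Disjoint B))
    (hu : (⋃ n, B n) = A) : (∑ n, ⨆ α, μ α (B n)) ∈ partitionSums μ A := by
  obtain ⟨N, hN⟩ := Nat.exists_eq_succ_of_ne_zero (Fintype.card_ne_zero (α := ι))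
  let e : ι ≃ Fin (N + 1) := (Fintype.equivFin ι).trans (finCongr hN)
  refine ⟨N, B ∘ e.symm, fun n => hm _, fun i j hij => hd (e.symm.injective.ne hij), ?_, ?_⟩
  · exact (e.symm.surjective.iUnion_comp B).trans hu
  · exact (e.symm.sum_comp fun n => ⨆ α, μ α (B n)).symm

lemma iSup_apply_mem_partitionSums {A : Set S} (hA : MeasurableSet A) :
    (⨆ α, μ α A) ∈ partitionSums μ A := by
  simpa using sum_mem_partitionSums μ (ι := Unit) (fun _ => A) (fun _ => hA)
    Subsingleton.pairwise (Set.iUnion_const A)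

lemma le_iSup_apply_of_mem_partitionSums {A : Set S} {x : ℝ≥0∞} (hx : x ∈ partitionSums μ A) :
    x ≤ (⨆ α, μ α) A := by
  obtain ⟨N, B, hm, hd, rfl, rfl⟩ := hx
  calc ∑ n, ⨆ α, μ α (B n) ≤ ∑ n, (⨆ α, μ α) (B n) :=
        Finset.sum_le_sum fun n _ => iSup_le fun α => le_iSup μ α (B n)
    _ = (⨆ α, μ α) (⋃ n, B n) := by rw [measure_iUnion hd hm, tsum_fintype]

lemma sSup_partitionSums_empty : sSup (partitionSums μ ∅) = 0 :=
  nonpos_iff_eq_zero.mp <| sSup_le fun _ hx => by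
    simpa using le_iSup_apply_of_mem_partitionSums μ hx

lemma sSup_partitionSums_add_le {A B : Set S} (hA : MeasurableSet A) (hB : MeasurableSet B)
    (hAB : Disjoint A B) :
    sSup (partitionSums μ A) + sSup (partitionSums μ B) ≤ sSup (partitionSums μ (A ∪ B)) := by
  rw [sSup_eq_iSup (s := partitionSums μ A), sSup_eq_iSup (s := partitionSums μ B)]
  refine ENNReal.biSup_add_biSup_le ⟨_, iSup_apply_mem_partitionSums μ hA⟩
    ⟨_, iSup_apply_mem_partitionSums μ hB⟩
    fun x ⟨N₁, C₁, hm₁, hd₁, hu₁, hx⟩ y ⟨N₂, C₂, hm₂, hd₂, hu₂, hy⟩ => le_sSup ?_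
  subst hx hy
  have hsub₁ : ∀ i, C₁ i ⊆ A := fun i => hu₁ ▸ Set.subset_iUnion C₁ i
  have hsub₂ : ∀ i, C₂ i ⊆ B := fun i => hu₂ ▸ Set.subset_iUnion C₂ i
  have hdisj : Pairwise (Function.onFun Disjoint (Sum.elim C₁ C₂)) := by
    rintro (i | i) (j | j) hij
    · exact hd₁ fun h => hij (congrArg Sum.inl h)
    · exact hAB.mono (hsub₁ i) (hsub₂ j)
    · exact (hAB.mono (hsub₁ j) (hsub₂ i)).symm
    · exact hd₂ fun h => hij (congrArg Sum.inr h)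
  have hmem := sum_mem_partitionSums μ (Sum.elim C₁ C₂) (by rintro (i | i) <;> simp [hm₁, hm₂])
    hdisj (A := A ∪ B) (by simp only [Set.iUnion_sum, Sum.elim_inl, Sum.elim_inr, hu₁, hu₂])
  simpa only [Fintype.sum_sum_type, Sum.elim_inl, Sum.elim_inr] using hmem

lemma sSup_partitionSums_mono {A B : Set S} (hA : MeasurableSet A) (hB : MeasurableSet B)
    (hAB : A ⊆ B) : sSup (partitionSums μ A) ≤ sSup (partitionSums μ B) :=
  calc sSup (partitionSums μ A)
      ≤ sSup (partitionSums μ A) + sSup (partitionSums μ (B \ A)) := le_self_add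
    _ ≤ sSup (partitionSums μ (A ∪ B \ A)) :=
        sSup_partitionSums_add_le μ hA (hB.diff hA) Set.disjoint_sdiff_right
    _ = sSup (partitionSums μ B) := by rw [Set.union_sdiff_cancel hAB]

lemma sSup_partitionSums_iUnion_le {f : ℕ → Set S} (hf : ∀ i, MeasurableSet (f i)) :
    sSup (partitionSums μ (⋃ i, f i)) ≤ ∑' i, sSup (partitionSums μ (f i)) := by
  refine sSup_le fun x ⟨N, B, hm, hd, hu, hx⟩ => hx ▸ ?_
  have hsplit : ∀ n, (⨆ α, μ α (B n)) ≤ ∑' i, ⨆ α, μ α (B n ∩ f i) := fun n =>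
    iSup_le fun α =>
      calc μ α (B n) = μ α (⋃ i, B n ∩ f i) := by
            rw [← Set.inter_iUnion, Set.inter_eq_left.mpr (hu ▸ Set.subset_iUnion B n)]
        _ ≤ ∑' i, μ α (B n ∩ f i) := measure_iUnion_le _
        _ ≤ ∑' i, ⨆ α, μ α (B n ∩ f i) :=
            ENNReal.tsum_le_tsum fun i => le_iSup (fun α => μ α (B n ∩ f i)) α
  calc ∑ n, ⨆ α, μ α (B n) ≤ ∑ n, ∑' i, ⨆ α, μ α (B n ∩ f i) :=
        Finset.sum_le_sum fun n _ => hsplit n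
    _ = ∑' i, ∑ n, ⨆ α, μ α (B n ∩ f i) :=
        (Summable.tsum_finsetSum fun n _ => ENNReal.summable).symm
    _ ≤ ∑' i, sSup (partitionSums μ (f i)) := by
        refine ENNReal.tsum_le_tsum fun i => le_sSup ⟨N, fun n => B n ∩ f i,
          fun n => (hm n).inter (hf i),
          fun a b hab => (hd hab).mono Set.inter_subset_left Set.inter_subset_left, ?_, rfl⟩
        rw [← Set.iUnion_inter, hu, Set.inter_eq_right.mpr (Set.subset_iUnion f i)]

lemma sum_range_sSup_partitionSums_le {f : ℕ → Set S} (hf : ∀ i, MeasurableSet (f i))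
    (hfd : Pairwise (Function.onFun Disjoint f)) (k : ℕ) :
    ∑ i ∈ Finset.range k, sSup (partitionSums μ (f i)) ≤ sSup (partitionSums μ (⋃ i < k, f i)) := by
  induction k with
  | zero => simp
  | succ k ih =>
    rw [Finset.sum_range_succ, Set.biUnion_lt_succ]
    exact (add_le_add_left ih _).trans <| sSup_partitionSums_add_le μ
      (.iUnion fun i => .iUnion fun _ => hf i) (hf k)
      (Set.disjoint_iUnion₂_left.mpr fun i hi => hfd hi.ne)

lemma sSup_partitionSums_iUnion {f : ℕ → Set S} (hf : ∀ i, MeasurableSet (f i))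
    (hfd : Pairwise (Function.onFun Disjoint f)) :
    sSup (partitionSums μ (⋃ i, f i)) = ∑' i, sSup (partitionSums μ (f i)) := by
  refine (sSup_partitionSums_iUnion_le μ hf).antisymm ?_
  rw [ENNReal.tsum_eq_iSup_nat]
  exact iSup_le fun k => (sum_range_sSup_partitionSums_le μ hf hfd k).trans <|
    sSup_partitionSums_mono μ (.iUnion fun i => .iUnion fun _ => hf i) (.iUnion hf)
      (Set.iUnion₂_subset fun i _ => Set.subset_iUnion f i)

noncomputable def partitionSupMeasure : Measure S :=
  ofMeasurable (fun A _ => sSup (partitionSums μ A)) (sSup_partitionSums_empty μ)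
    fun _ hf hfd => sSup_partitionSums_iUnion μ hf hfd

lemma partitionSupMeasure_apply {A : Set S} (hA : MeasurableSet A) :
    partitionSupMeasure μ A = sSup (partitionSums μ A) :=
  ofMeasurable_apply A hA

lemma iSup_le_partitionSupMeasure : ⨆ α, μ α ≤ partitionSupMeasure μ :=
  iSup_le fun α => le_iff.mpr fun A hA => (partitionSupMeasure_apply μ hA).symm ▸
    (le_iSup (fun α => μ α A) α).trans (le_sSup (iSup_apply_mem_partitionSums μ hA))

end MeasureTheory.Measure

theorem stmt0_general {S : Type*} [MeasurableSpace S] {Λ : Type*}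
    (μ : Λ → Measure S) {A : Set S} (hA : MeasurableSet A) :
    (⨆ α, μ α) A =
      sSup {x : ℝ≥0∞ | ∃ (N : ℕ) (B : Fin (N + 1) → Set S),
        (∀ n, MeasurableSet (B n)) ∧ Pairwise (Function.onFun Disjoint B) ∧
        (⋃ n, B n) = A ∧ x = ∑ n, ⨆ α, μ α (B n)} :=
  le_antisymm
    (calc (⨆ α, μ α) A ≤ Measure.partitionSupMeasure μ A :=
          Measure.le_iff.mp (Measure.iSup_le_partitionSupMeasure μ) A hA
      _ = _ := Measure.partitionSupMeasure_apply μ hA)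
    (sSup_le fun _ => Measure.le_iSup_apply_of_mem_partitionSums μ)

/-- The supremum of a nonempty family of measures evaluated on a measurable set `A` equals the
supremum, over all finite measurable partitions of `A` into pairwise disjoint pieces, of the sum
over the pieces of the pointwise suprema of the measures. -/
theorem stmt0 {S : Type*} [MeasurableSpace S] {Λ : Type*} [Nonempty Λ]
    (μ : Λ → Measure S) {A : Set S} (hA : MeasurableSet A) :
    (⨆ α, μ α) A =
      sSup {x : ℝ≥0∞ | ∃ (N : ℕ) (B : Fin (N + 1) → Set S),
        (∀ n, MeasurableSet (B n)) ∧ Pairwise (Function.onFun Disjoint B) ∧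
        (⋃ n, B n) = A ∧ x = ∑ n, ⨆ α, μ α (B n)} :=
  stmt0_general μ hA
end

section
/- Let (μ_α)_{α∈Λ} be a nonempty family of Borel measures on ℝ whose supremum measure μ̌ = ⨆_{α∈Λ} μ_α is finite on bounded intervals. Then for all real numbers a < b, μ̌((a,b]) = sup { Σ_{n=1}^N sup_{α∈Λ} μ_α((t_{n-1},t_n]) : N ≥ 1, a = t_0 < t_1 < … < t_N = b }. Moreover, the supremum on the right-hand side is unchanged if the interior partition points t_1,…,t_{N-1} are additionally required to be rational. -/
open MeasureTheory
open scoped ENNReal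

/-!
The partition sums never exceed `ν (Ioc a b)`, where `ν = ⨆ α, μ α`, since `ν` dominates every
`μ α` and is additive along a partition. Conversely, let `S x y` be the supremum of the partition
sums on `(x, y]`. Concatenating partitions makes `S` superadditive, so `x ↦ S a (min x b)` is
monotone; its right-continuous regularisation `F` is a Stieltjes function with
`F b - F a ≤ S a b`, and superadditivity gives `μ α ((c, d] ∩ (a, b]) ≤ F d - F c`. Hence every
`μ α`, and therefore `ν`, lies below the Stieltjes measure of `F` on `(a, b]` plus `ν` off
`(a, b]`, and evaluating at `(a, b]` yields `ν (Ioc a b) ≤ S a b`.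

For rational partition points, shift each interior point `tᵢ` slightly to the right to a
rational `qᵢ`: by subadditivity a partition sum drops by at most the masses `⨆ α, μ α (Ioc tᵢ qᵢ)`,
which are small because the finite measure `ν` is continuous from above.
-/

open Set Filter Topology

def partitionSums (φ : ℝ → ℝ → ℝ≥0∞) (p : ℝ → Prop) (a b : ℝ) : Set ℝ≥0∞ :=
  {x | ∃ (N : ℕ) (t : Fin (N + 1) → ℝ), 0 < N ∧ StrictMono t ∧ t 0 = a ∧ t (Fin.last N) = b ∧
    (∀ i : Fin (N + 1), i ≠ 0 → i ≠ Fin.last N → p (t i)) ∧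
    x = ∑ i : Fin N, φ (t i.castSucc) (t i.succ)}

noncomputable def partitionSup (φ : ℝ → ℝ → ℝ≥0∞) (a b : ℝ) : ℝ≥0∞ :=
  sSup (partitionSums φ (fun _ => True) a b)

section PartitionSums

variable {φ : ℝ → ℝ → ℝ≥0∞} {p q : ℝ → Prop} {a b c : ℝ} {u v : ℝ≥0∞}

theorem mem_partitionSums_iff : u ∈ partitionSums φ p a b ↔
    ∃ (N : ℕ) (T : ℕ → ℝ), 0 < N ∧ (∀ i < N, T i < T (i + 1)) ∧ T 0 = a ∧ T N = b ∧
      (∀ i, 0 < i → i < N → p (T i)) ∧ u = ∑ i ∈ Finset.range N, φ (T i) (T (i + 1)) := by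
  constructor
  · rintro ⟨N, t, hN, ht, rfl, rfl, hp, rfl⟩
    refine ⟨N, fun n => t (Fin.clamp n N), hN, fun i hi => ht ?_, ?_, ?_,
      fun i hi hiN => hp _ ?_ ?_, ?_⟩
    · rw [Fin.lt_def, Fin.coe_clamp, Fin.coe_clamp]; omega
    · rfl
    · exact congrArg t (Fin.ext (by simp))
    · simp only [ne_eq, Fin.ext_iff, Fin.coe_clamp, Fin.val_zero]; omega
    · simp only [ne_eq, Fin.ext_iff, Fin.coe_clamp, Fin.val_last]; omega
    · rw [← Fin.sum_univ_eq_sum_range (fun i => φ (t (Fin.clamp i N)) (t (Fin.clamp (i + 1) N)))]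
      congr! with i <;> ext <;> simp
  · rintro ⟨N, T, hN, hT, rfl, rfl, hp, rfl⟩
    refine ⟨N, fun i => T i, hN, Fin.strictMono_iff_lt_succ.2 fun i => hT i i.2, rfl, rfl,
      fun i hi hiN => hp i (Fin.pos_iff_ne_zero.2 hi) (Fin.val_lt_last hiN),
      (Fin.sum_univ_eq_sum_range (fun i => φ (T i) (T (i + 1))) N).symm⟩

theorem partitionSums_mono (hpq : ∀ z, p z → q z) :
    partitionSums φ p a b ⊆ partitionSums φ q a b := by
  rintro x ⟨N, t, hN, ht, h0, hN', hp, rfl⟩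
  exact ⟨N, t, hN, ht, h0, hN', fun i hi hiN => hpq _ (hp i hi hiN), rfl⟩

theorem partitionSums_eq_empty (hba : b ≤ a) : partitionSums φ p a b = ∅ := by
  refine eq_empty_of_forall_notMem fun x ⟨N, t, hN, ht, h0, hN', _⟩ => hba.not_gt ?_
  rw [← h0, ← hN']
  exact ht (Fin.lt_def.2 hN)

theorem apply_mem_partitionSums (hab : a < b) : φ a b ∈ partitionSums φ p a b :=
  mem_partitionSums_iff.2 ⟨1, fun n => if n = 0 then a else b, one_pos, by simpa using hab,
    rfl, rfl, by omega, by simp⟩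

theorem add_mem_partitionSums (hu : u ∈ partitionSums φ p a b) (hv : v ∈ partitionSums φ p b c)
    (hb : p b) : u + v ∈ partitionSums φ p a c := by
  obtain ⟨N, T₁, hN, hT₁, rfl, rfl, hp₁, rfl⟩ := mem_partitionSums_iff.1 hu
  obtain ⟨K, T₂, hK, hT₂, h₀, rfl, hp₂, rfl⟩ := mem_partitionSums_iff.1 hv
  set T : ℕ → ℝ := fun n => if n ≤ N then T₁ n else T₂ (n - N)
  have hT_left : ∀ n ≤ N, T n = T₁ n := fun n hn => if_pos hn
  have hT_right : ∀ n, N ≤ n → T n = T₂ (n - N) := by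
    intro n hn
    rcases hn.eq_or_lt with rfl | hn
    · simp [T, h₀]
    · exact if_neg hn.not_ge
  refine mem_partitionSums_iff.2 ⟨N + K, T, by omega, fun i hi => ?_, hT_left 0 (by omega),
    by rw [hT_right _ (by omega), Nat.add_sub_cancel_left], fun i hi hiNK => ?_, ?_⟩
  · rcases lt_or_ge i N with hiN | hiN
    · rw [hT_left i hiN.le, hT_left (i + 1) hiN]
      exact hT₁ i hiN
    · rw [hT_right i hiN, hT_right (i + 1) (by omega), Nat.sub_add_comm hiN]
      exact hT₂ _ (by omega)
  · rcases lt_trichotomy i N with hiN | rfl | hiN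
    · rw [hT_left i hiN.le]
      exact hp₁ i hi hiN
    · rwa [hT_left i le_rfl]
    · rw [hT_right i hiN.le]
      exact hp₂ _ (by omega) (by omega)
  · rw [Finset.sum_range_add]
    congr 1
    · refine Finset.sum_congr rfl fun i hi => ?_
      have hiN := Finset.mem_range.1 hi
      rw [hT_left i hiN.le, hT_left (i + 1) hiN]
    · refine Finset.sum_congr rfl fun i _ => ?_
      rw [hT_right (N + i) (by omega), hT_right (N + i + 1) (by omega), Nat.add_sub_cancel_left,
        add_assoc, Nat.add_sub_cancel_left]

theorem partitionSup_add_le (hab : a < b) (hbc : b < c) :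
    partitionSup φ a b + partitionSup φ b c ≤ partitionSup φ a c := by
  rw [partitionSup, partitionSup, sSup_eq_iSup, sSup_eq_iSup]
  exact ENNReal.biSup_add_biSup_le ⟨_, apply_mem_partitionSums hab⟩
    ⟨_, apply_mem_partitionSums hbc⟩ fun u hu v hv => le_sSup (add_mem_partitionSums hu hv trivial)

theorem apply_le_partitionSup (hab : a < b) : φ a b ≤ partitionSup φ a b :=
  le_sSup (apply_mem_partitionSums hab)

theorem partitionSup_of_le (hba : b ≤ a) : partitionSup φ a b = 0 := by
  rw [partitionSup, partitionSums_eq_empty hba, sSup_empty, bot_eq_zero]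

theorem monotone_partitionSup : Monotone (partitionSup φ a) := by
  intro y z hyz
  rcases le_or_gt y a with hya | hay
  · simp [partitionSup_of_le hya]
  rcases hyz.eq_or_lt with rfl | hyz
  · rfl
  · exact le_add_right le_rfl |>.trans (partitionSup_add_le hay hyz)

theorem apply_le_add_of_le (hsub : ∀ x y z, φ x z ≤ φ x y + φ y z)
    (hdeg : ∀ x y, y ≤ x → φ x y = 0) (x x' : ℝ) {y y' : ℝ} (hy : y ≤ y') :
    φ x y ≤ φ x x' + φ x' y' :=
  calc φ x y ≤ φ x x' + φ x' y := hsub x x' y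
    _ ≤ φ x x' + (φ x' y' + φ y' y) := by gcongr; exact hsub x' y' y
    _ = φ x x' + φ x' y' := by rw [hdeg y' y hy, add_zero]

theorem exists_apply_lt_of_dense (hcont : ∀ x, Tendsto (φ x) (𝓝[>] x) (𝓝 0))
    (hp : ∀ x y, x < y → ∃ z, p z ∧ x < z ∧ z < y) {x y : ℝ} (hxy : x < y) {ε : ℝ≥0∞}
    (hε : 0 < ε) : ∃ z, p z ∧ x < z ∧ z < y ∧ φ x z < ε := by
  obtain ⟨u, hxu, hu⟩ := mem_nhdsGT_iff_exists_Ioo_subset.1 ((hcont x).eventually (gt_mem_nhds hε))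
  obtain ⟨z, hz, hxz, hzu⟩ := hp x (min u y) (lt_min hxu hxy)
  exact ⟨z, hz, hxz, hzu.trans_le (min_le_right _ _), hu ⟨hxz, hzu.trans_le (min_le_left _ _)⟩⟩

theorem partitionSup_le_sSup_partitionSums_of_dense (hsub : ∀ x y z, φ x z ≤ φ x y + φ y z)
    (hdeg : ∀ x y, y ≤ x → φ x y = 0) (hcont : ∀ x, Tendsto (φ x) (𝓝[>] x) (𝓝 0))
    (hp : ∀ x y, x < y → ∃ z, p z ∧ x < z ∧ z < y) :
    partitionSup φ a b ≤ sSup (partitionSums φ p a b) := by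
  refine sSup_le fun s hs => ?_
  obtain ⟨N, T, hN, hT, rfl, rfl, -, rfl⟩ := mem_partitionSums_iff.1 hs
  refine ENNReal.le_of_forall_pos_le_add fun ε hε _ => ?_
  have hεN : 0 < (ε : ℝ≥0∞) / N := ENNReal.div_pos (by simpa using hε.ne') (by simp)
  choose! r hr using fun i (hi : i < N) => exists_apply_lt_of_dense hcont hp (hT i hi) hεN
  set Q : ℕ → ℝ := fun i => if 0 < i ∧ i < N then r i else T i
  have hTQ : ∀ i ≤ N, T i ≤ Q i := by
    intro i hi
    by_cases h : 0 < i ∧ i < N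
    · simpa [Q, h] using (hr i h.2).2.1.le
    · simp [Q, h]
  have hQT : ∀ i < N, Q i < T (i + 1) := by
    intro i hi
    by_cases h : 0 < i
    · simpa [Q, h, hi] using (hr i hi).2.2.1
    · simpa [Q, h] using hT i hi
  have hTQ_small : ∀ i < N, φ (T i) (Q i) ≤ ε / N := by
    intro i hi
    by_cases h : 0 < i
    · simpa [Q, h, hi] using (hr i hi).2.2.2.le
    · simp [Q, h, hdeg]
  have hmem : ∑ i ∈ Finset.range N, φ (Q i) (Q (i + 1)) ∈ partitionSums φ p (T 0) (T N) := by
    refine mem_partitionSums_iff.2 ⟨N, Q, hN, fun i hi => (hQT i hi).trans_le (hTQ (i + 1) hi),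
      by simp [Q], by simp [Q], fun i hi hiN => ?_, rfl⟩
    simpa [Q, hi, hiN] using (hr i hiN).1
  calc ∑ i ∈ Finset.range N, φ (T i) (T (i + 1))
      ≤ ∑ i ∈ Finset.range N, (ε / N + φ (Q i) (Q (i + 1))) := by
        refine Finset.sum_le_sum fun i hi => ?_
        have hiN := Finset.mem_range.1 hi
        grw [apply_le_add_of_le hsub hdeg (T i) (Q i) (hTQ (i + 1) hiN), hTQ_small i hiN]
    _ = N * (ε / N) + ∑ i ∈ Finset.range N, φ (Q i) (Q (i + 1)) := by
        rw [Finset.sum_add_distrib, Finset.sum_const, Finset.card_range, nsmul_eq_mul]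
    _ ≤ sSup (partitionSums φ p (T 0) (T N)) + ε := by
        rw [add_comm]
        gcongr
        · exact le_sSup hmem
        · exact ENNReal.mul_div_le

end PartitionSums

theorem sum_measure_Ioc_of_monotone {α : Type*} [LinearOrder α] [MeasurableSpace α]
    [TopologicalSpace α] [OrderClosedTopology α] [OpensMeasurableSpace α] (m : Measure α) {N : ℕ}
    {t : Fin (N + 1) → α} (ht : Monotone t) :
    ∑ i : Fin N, m (Ioc (t i.castSucc) (t i.succ)) = m (Ioc (t 0) (t (Fin.last N))) := by
  induction N with
  | zero => simp
  | succ N ih =>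
    have ih' := ih (ht.comp Fin.strictMono_castSucc.monotone)
    simp only [Function.comp_apply, ← Fin.succ_castSucc] at ih'
    rw [Fin.sum_univ_castSucc, ih', Fin.castSucc_zero, ← measure_union
      (Ioc_disjoint_Ioc_of_le le_rfl) measurableSet_Ioc, Ioc_union_Ioc_eq_Ioc (ht (Fin.zero_le _))
      (ht (Fin.castSucc_le_succ _))]
    rfl

theorem tendsto_measure_Ioc_nhdsGT (m : Measure ℝ) {x y : ℝ} (hxy : x < y)
    (hy : m (Ioc x y) ≠ ∞) : Tendsto (fun z => m (Ioc x z)) (𝓝[>] x) (𝓝 0) := by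
  have hempty : ⋂ z > x, Ioc x z = ∅ :=
    eq_empty_of_forall_notMem fun w hw => by
      have hxw := (mem_iInter₂.1 hw y hxy).1
      exact (mem_iInter₂.1 hw ((x + w) / 2) (by linarith)).2.not_gt (by linarith)
  simpa [hempty, Function.comp_def] using
    tendsto_measure_biInter_gt (fun _ _ => measurableSet_Ioc.nullMeasurableSet)
      (fun z w _ hzw => Ioc_subset_Ioc_right hzw) ⟨y, hxy, hy⟩

theorem StieltjesFunction.le_measure_of_measure_Ioc_le (f : StieltjesFunction ℝ) {m : Measure ℝ}
    (h : ∀ c d, m (Ioc c d) ≤ ENNReal.ofReal (f d - f c)) : m ≤ f.measure := by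
  have hle : m.toOuterMeasure ≤ f.outer := by
    refine OuterMeasure.le_ofFunction.2 fun s => ?_
    rw [f.length_eq]
    refine le_iInf₂ fun c d => le_iInf fun hs => (measure_mono fun x hx => hs ?_).trans (h c d)
    exact ⟨hx, notMem_botSet_of_lt (sub_one_lt x)⟩
  intro s
  rw [StieltjesFunction.measure]
  exact hle s

theorem partitionSup_le_measure {φ : ℝ → ℝ → ℝ≥0∞} {m : Measure ℝ}
    (hφ : ∀ x y, φ x y ≤ m (Ioc x y)) (a b : ℝ) : partitionSup φ a b ≤ m (Ioc a b) := by
  refine sSup_le ?_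
  rintro _ ⟨N, t, -, ht, rfl, rfl, -, rfl⟩
  exact (Finset.sum_le_sum fun i _ => hφ _ _).trans (sum_measure_Ioc_of_monotone m ht.monotone).le

section Stieltjes

variable {φ : ℝ → ℝ → ℝ≥0∞} (hfin : ∀ x y, partitionSup φ x y ≠ ∞) (a b : ℝ)

noncomputable def clampedPartitionSup (φ : ℝ → ℝ → ℝ≥0∞) (a b x : ℝ) : ℝ :=
  (partitionSup φ a (min x b)).toReal

include hfin in
theorem monotone_clampedPartitionSup : Monotone (clampedPartitionSup φ a b) := fun _ _ hxy =>
  ENNReal.toReal_mono (hfin _ _) (monotone_partitionSup (min_le_min_right b hxy))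

noncomputable def partitionStieltjes : StieltjesFunction ℝ :=
  (monotone_clampedPartitionSup hfin a b).stieltjesFunction

theorem measure_partitionStieltjes_Ioc_le :
    (partitionStieltjes hfin a b).measure (Ioc a b) ≤ partitionSup φ a b := by
  have hG := monotone_clampedPartitionSup hfin a b
  have hb : partitionStieltjes hfin a b b ≤ (partitionSup φ a b).toReal := by
    simpa [partitionStieltjes, clampedPartitionSup, hG.stieltjesFunction_eq] using
      hG.rightLim_le (lt_add_one b)
  have ha : 0 ≤ partitionStieltjes hfin a b a := by
    rw [partitionStieltjes, hG.stieltjesFunction_eq]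
    exact ENNReal.toReal_nonneg.trans (hG.le_rightLim le_rfl)
  rw [StieltjesFunction.measure_Ioc, ← ENNReal.ofReal_toReal (hfin a b)]
  exact ENNReal.ofReal_le_ofReal (by linarith)

variable {a b} in
theorem partitionSup_le_partitionStieltjes_sub {c d y z : ℝ} (hay : a < y) (hyz : y < z)
    (hzb : z ≤ b) (hcy : c < y) (hzd : z ≤ d) :
    partitionSup φ y z ≤
      ENNReal.ofReal (partitionStieltjes hfin a b d - partitionStieltjes hfin a b c) := by
  have hG := monotone_clampedPartitionSup hfin a b
  have hG_eq : ∀ w ≤ b, clampedPartitionSup φ a b w = (partitionSup φ a w).toReal := fun w hw => by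
    rw [clampedPartitionSup, min_eq_left hw]
  have hc : partitionStieltjes hfin a b c ≤ clampedPartitionSup φ a b y := by
    rw [partitionStieltjes, hG.stieltjesFunction_eq]
    exact hG.rightLim_le hcy
  have hd : clampedPartitionSup φ a b z ≤ partitionStieltjes hfin a b d := by
    rw [partitionStieltjes, hG.stieltjesFunction_eq]
    exact hG.le_rightLim hzd
  calc partitionSup φ y z ≤ partitionSup φ a z - partitionSup φ a y :=
        ENNReal.le_sub_of_add_le_left (hfin a y) (partitionSup_add_le hay hyz)
    _ = ENNReal.ofReal (clampedPartitionSup φ a b z - clampedPartitionSup φ a b y) := by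
        rw [hG_eq z hzb, hG_eq y (hyz.le.trans hzb), ENNReal.ofReal_sub _ ENNReal.toReal_nonneg,
          ENNReal.ofReal_toReal (hfin a z), ENNReal.ofReal_toReal (hfin a y)]
    _ ≤ _ := ENNReal.ofReal_le_ofReal (by linarith)

theorem restrict_le_measure_partitionStieltjes {m : Measure ℝ} (hm : ∀ x y, m (Ioc x y) ≤ φ x y) :
    m.restrict (Ioc a b) ≤ (partitionStieltjes hfin a b).measure := by
  refine (partitionStieltjes hfin a b).le_measure_of_measure_Ioc_le fun c d => ?_
  rw [Measure.restrict_apply measurableSet_Ioc, Ioc_inter_Ioc]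
  rcases le_or_gt (d ⊓ b) (c ⊔ a) with h | h
  · simp [Ioc_eq_empty_of_le h]
  set F := partitionStieltjes hfin a b
  have hsplit : ∀ y ∈ Ioo (c ⊔ a) (d ⊓ b),
      m (Ioc (c ⊔ a) (d ⊓ b)) ≤ m (Ioc (c ⊔ a) y) + ENNReal.ofReal (F d - F c) := fun y hy =>
    calc m (Ioc (c ⊔ a) (d ⊓ b)) ≤ m (Ioc (c ⊔ a) y) + m (Ioc y (d ⊓ b)) :=
          (measure_mono Ioc_subset_Ioc_union_Ioc).trans (measure_union_le _ _)
      _ ≤ m (Ioc (c ⊔ a) y) + partitionSup φ y (d ⊓ b) := by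
          gcongr
          exact (hm _ _).trans (apply_le_partitionSup hy.2)
      _ ≤ m (Ioc (c ⊔ a) y) + ENNReal.ofReal (F d - F c) := by
          gcongr
          exact partitionSup_le_partitionStieltjes_sub hfin (le_max_right c a |>.trans_lt hy.1) hy.2
            (min_le_right d b) (le_max_left c a |>.trans_lt hy.1) (min_le_left d b)
  have hm_fin : m (Ioc (c ⊔ a) (d ⊓ b)) ≠ ∞ :=
    ne_top_of_le_ne_top (hfin _ _) ((hm _ _).trans (apply_le_partitionSup h))
  have htend := (tendsto_measure_Ioc_nhdsGT m h hm_fin).add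
    (tendsto_const_nhds (x := ENNReal.ofReal (F d - F c)))
  simpa using ge_of_tendsto htend (eventually_of_mem (Ioo_mem_nhdsGT h) hsplit)

end Stieltjes

theorem iSup_measure_Ioc_le_partitionSup {Λ : Type*} (μ : Λ → Measure ℝ) {φ : ℝ → ℝ → ℝ≥0∞}
    (hμ : ∀ α x y, μ α (Ioc x y) ≤ φ x y) (hfin : ∀ x y, partitionSup φ x y ≠ ∞) (a b : ℝ) :
    (⨆ α, μ α) (Ioc a b) ≤ partitionSup φ a b := by
  set F := partitionStieltjes hfin a b
  have hdom : ⨆ α, μ α ≤ F.measure + (⨆ α, μ α).restrict (Ioc a b)ᶜ := iSup_le fun α =>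
    calc μ α = (μ α).restrict (Ioc a b) + (μ α).restrict (Ioc a b)ᶜ :=
          (Measure.restrict_add_restrict_compl measurableSet_Ioc).symm
      _ ≤ F.measure + (⨆ α, μ α).restrict (Ioc a b)ᶜ :=
          add_le_add (restrict_le_measure_partitionStieltjes hfin a b (hμ α))
            (Measure.restrict_mono_measure (le_iSup μ α) _)
  calc (⨆ α, μ α) (Ioc a b) ≤ (F.measure + (⨆ α, μ α).restrict (Ioc a b)ᶜ) (Ioc a b) := hdom _
    _ = F.measure (Ioc a b) := by simp [Measure.restrict_apply measurableSet_Ioc]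
    _ ≤ partitionSup φ a b := measure_partitionStieltjes_Ioc_le hfin a b

section SupIoc

variable {Λ : Type*} (μ : Λ → Measure ℝ)

noncomputable def supIoc (x y : ℝ) : ℝ≥0∞ := ⨆ α, μ α (Ioc x y)

theorem le_supIoc (α : Λ) (x y : ℝ) : μ α (Ioc x y) ≤ supIoc μ x y :=
  le_iSup (fun α => μ α (Ioc x y)) α

theorem supIoc_le_iSup (x y : ℝ) : supIoc μ x y ≤ (⨆ α, μ α) (Ioc x y) :=
  iSup_le fun α => le_iSup μ α _

theorem supIoc_le_add (x y z : ℝ) : supIoc μ x z ≤ supIoc μ x y + supIoc μ y z :=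
  iSup_le fun α => (measure_mono Ioc_subset_Ioc_union_Ioc).trans <|
    (measure_union_le _ _).trans (add_le_add (le_supIoc μ α x y) (le_supIoc μ α y z))

theorem supIoc_of_le {x y : ℝ} (hyx : y ≤ x) : supIoc μ x y = 0 := by
  simp [supIoc, Ioc_eq_empty_of_le hyx]

theorem tendsto_supIoc_nhdsGT (hfin : ∀ x y, (⨆ α, μ α) (Ioc x y) ≠ ∞) (x : ℝ) :
    Tendsto (supIoc μ x) (𝓝[>] x) (𝓝 0) :=
  tendsto_of_tendsto_of_tendsto_of_le_of_le tendsto_const_nhds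
    (tendsto_measure_Ioc_nhdsGT _ (lt_add_one x) (hfin x (x + 1))) (fun _ => bot_le)
    (supIoc_le_iSup μ x)

end SupIoc

theorem stmt2_general {Λ : Type*} (μ : Λ → Measure ℝ)
    (hfin : ∀ a b : ℝ, (⨆ α, μ α) (Set.Icc a b) ≠ ⊤)
    (a b : ℝ) :
    (⨆ α, μ α) (Set.Ioc a b) =
      sSup {x : ℝ≥0∞ | ∃ (N : ℕ) (t : Fin (N + 1) → ℝ), 0 < N ∧ StrictMono t ∧
        t 0 = a ∧ t (Fin.last N) = b ∧
        x = ∑ i : Fin N, ⨆ α, μ α (Set.Ioc (t i.castSucc) (t i.succ))} ∧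
    sSup {x : ℝ≥0∞ | ∃ (N : ℕ) (t : Fin (N + 1) → ℝ), 0 < N ∧ StrictMono t ∧
        t 0 = a ∧ t (Fin.last N) = b ∧
        x = ∑ i : Fin N, ⨆ α, μ α (Set.Ioc (t i.castSucc) (t i.succ))} =
      sSup {x : ℝ≥0∞ | ∃ (N : ℕ) (t : Fin (N + 1) → ℝ), 0 < N ∧ StrictMono t ∧
        t 0 = a ∧ t (Fin.last N) = b ∧
        (∀ i : Fin (N + 1), i ≠ 0 → i ≠ Fin.last N → ∃ q : ℚ, t i = (q : ℝ)) ∧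
        x = ∑ i : Fin N, ⨆ α, μ α (Set.Ioc (t i.castSucc) (t i.succ))} := by
  have hfin_Ioc : ∀ x y, (⨆ α, μ α) (Ioc x y) ≠ ∞ := fun x y =>
    ne_top_of_le_ne_top (hfin x y) (measure_mono Ioc_subset_Icc_self)
  have hsup_le := partitionSup_le_measure (supIoc_le_iSup μ)
  have hsup_fin : ∀ x y, partitionSup (supIoc μ) x y ≠ ∞ := fun x y =>
    ne_top_of_le_ne_top (hfin_Ioc x y) (hsup_le x y)
  have hmeasure : (⨆ α, μ α) (Ioc a b) = partitionSup (supIoc μ) a b :=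
    le_antisymm (iSup_measure_Ioc_le_partitionSup μ (le_supIoc μ) hsup_fin a b) (hsup_le a b)
  have hrat : partitionSup (supIoc μ) a b =
      sSup (partitionSums (supIoc μ) (fun x => ∃ q : ℚ, x = q) a b) :=
    le_antisymm
      (partitionSup_le_sSup_partitionSums_of_dense (supIoc_le_add μ) (fun _ _ => supIoc_of_le μ)
        (tendsto_supIoc_nhdsGT μ hfin_Ioc) fun x y hxy =>
          let ⟨q, hxq, hqy⟩ := exists_rat_btwn hxy; ⟨q, ⟨q, rfl⟩, hxq, hqy⟩)
      (sSup_le_sSup (partitionSums_mono fun _ _ => trivial))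
  simp only [partitionSup, partitionSums, supIoc, implies_true, true_and] at hmeasure hrat
  exact ⟨hmeasure, hrat⟩

/-- For a nonempty family of Borel measures on `ℝ` whose supremum measure is finite on bounded
intervals, the supremum measure of `(a, b]` is the supremum over finite partitions
`a = t₀ < t₁ < … < t_N = b` of the sums of pointwise suprema over the subintervals
`(t_{n-1}, t_n]`; moreover this supremum is unchanged if the interior partition points are
required to be rational. -/
theorem stmt2 {Λ : Type*} [Nonempty Λ] (μ : Λ → Measure ℝ)
    (hfin : ∀ a b : ℝ, (⨆ α, μ α) (Set.Icc a b) ≠ ⊤)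
    (a b : ℝ) (hab : a < b) :
    (⨆ α, μ α) (Set.Ioc a b) =
      sSup {x : ℝ≥0∞ | ∃ (N : ℕ) (t : Fin (N + 1) → ℝ), 0 < N ∧ StrictMono t ∧
        t 0 = a ∧ t (Fin.last N) = b ∧
        x = ∑ i : Fin N, ⨆ α, μ α (Set.Ioc (t i.castSucc) (t i.succ))} ∧
    sSup {x : ℝ≥0∞ | ∃ (N : ℕ) (t : Fin (N + 1) → ℝ), 0 < N ∧ StrictMono t ∧
        t 0 = a ∧ t (Fin.last N) = b ∧
        x = ∑ i : Fin N, ⨆ α, μ α (Set.Ioc (t i.castSucc) (t i.succ))} =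
      sSup {x : ℝ≥0∞ | ∃ (N : ℕ) (t : Fin (N + 1) → ℝ), 0 < N ∧ StrictMono t ∧
        t 0 = a ∧ t (Fin.last N) = b ∧
        (∀ i : Fin (N + 1), i ≠ 0 → i ≠ Fin.last N → ∃ q : ℚ, t i = (q : ℝ)) ∧
        x = ∑ i : Fin N, ⨆ α, μ α (Set.Ioc (t i.castSucc) (t i.succ))} :=
  stmt2_general μ hfin a b
end

section
/- Let (S,Σ,ν) be a measure space, let F be a nonempty set of measurable functions from S into [0,∞], and let (f_j)_{j≥1} be a sequence in F such that the pointwise supremum satisfies sup_{f∈F} f = sup_{j≥1} f_j. For each f ∈ F define the measure μ_f on (S,Σ) by μ_f(A) = ∫_A f dν. Then the supremum measure μ̌ = ⨆_{f∈F} μ_f satisfies μ̌ = ⨆_{j≥1} μ_{f_j}, and for every A ∈ Σ one has μ̌(A) = ∫_A (sup_{f∈F} f) dν. -/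
open MeasureTheory
open scoped ENNReal

/-! Densities commute with countable suprema: `ν.withDensity` turns `⊔` of two measurable
densities into `⊔` of measures (split a set according to which density is larger), hence partial
suprema into partial suprema, and monotone convergence passes to the limit. Since
`⨆ g ∈ F, g = ⨆ j, f j`, every `ν.withDensity g` with `g ∈ F` lies below
`ν.withDensity (⨆ j, f j) = ⨆ j, ν.withDensity (f j)`. -/

theorem Measurable.partialSups {α β ι : Type*} [MeasurableSpace α] [MeasurableSpace β]
    [SemilatticeSup α] [MeasurableSup₂ α] [Preorder ι] [LocallyFiniteOrderBot ι]
    {f : ι → β → α} (hf : ∀ i, Measurable (f i)) (i : ι) : Measurable (partialSups f i) :=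
  Finset.measurable_sup' Finset.nonempty_Iic fun j _ => hf j

namespace MeasureTheory

variable {S : Type*} [MeasurableSpace S] {ν : Measure S}

theorem withDensity_sup {a b : S → ℝ≥0∞} (ha : Measurable a) (hb : Measurable b) :
    ν.withDensity (a ⊔ b) = ν.withDensity a ⊔ ν.withDensity b := by
  refine le_antisymm (Measure.le_iff.2 fun A hA => ?_)
    (sup_le (withDensity_mono (.of_forall (le_sup_left : a ≤ a ⊔ b)))
      (withDensity_mono (.of_forall (le_sup_right : b ≤ a ⊔ b))))
  set B := A ∩ {s | b s ≤ a s}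
  have hB : MeasurableSet B := hA.inter (measurableSet_le hb ha)
  have hAB : B ∪ A \ B = A := Set.union_sdiff_cancel Set.inter_subset_left
  have hBa : ∫⁻ s in B, (a ⊔ b) s ∂ν = ∫⁻ s in B, a s ∂ν :=
    setLIntegral_congr_fun hB fun s hs => sup_eq_left.2 hs.2
  have hBb : ∫⁻ s in A \ B, (a ⊔ b) s ∂ν = ∫⁻ s in A \ B, b s ∂ν :=
    setLIntegral_congr_fun (hA.diff hB) fun s hs =>
      sup_eq_right.2 (le_of_not_ge fun h => hs.2 ⟨hs.1, h⟩)
  calc ν.withDensity (a ⊔ b) A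
      = ∫⁻ s in B, a s ∂ν + ∫⁻ s in A \ B, b s ∂ν := by
        rw [withDensity_apply _ hA, ← hBa, ← hBb,
          ← lintegral_union (hA.diff hB) Set.disjoint_sdiff_right, hAB]
    _ = ν.withDensity a B + ν.withDensity b (A \ B) := by
        rw [withDensity_apply _ hB, withDensity_apply _ (hA.diff hB)]
    _ ≤ (ν.withDensity a ⊔ ν.withDensity b) B
          + (ν.withDensity a ⊔ ν.withDensity b) (A \ B) :=
        add_le_add (Measure.le_iff'.1 le_sup_left B) (Measure.le_iff'.1 le_sup_right _)
    _ = (ν.withDensity a ⊔ ν.withDensity b) A := by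
        rw [← measure_union Set.disjoint_sdiff_right (hA.diff hB), hAB]

theorem withDensity_partialSups {f : ℕ → S → ℝ≥0∞} (hf : ∀ n, Measurable (f n))
    (n : ℕ) :
    ν.withDensity (partialSups f n) = partialSups (fun j => ν.withDensity (f j)) n := by
  induction n with
  | zero => simp only [partialSups_zero]
  | succ n ih =>
    rw [partialSups_add_one, partialSups_add_one, withDensity_sup (.partialSups hf n) (hf _), ih]

theorem withDensity_iSup {f : ℕ → S → ℝ≥0∞} (hf : ∀ n, Measurable (f n)) :
    ν.withDensity (⨆ n, f n) = ⨆ n, ν.withDensity (f n) := by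
  refine le_antisymm (Measure.le_iff.2 fun A hA => ?_)
    (iSup_le fun n => withDensity_mono (.of_forall (le_iSup f n)))
  calc ν.withDensity (⨆ n, f n) A
      = ⨆ n, ν.withDensity (partialSups f n) A := by
        rw [← iSup_partialSups_eq f, withDensity_apply _ hA]
        simp_rw [iSup_apply, withDensity_apply _ hA]
        exact lintegral_iSup (.partialSups hf) (partialSups_monotone f)
    _ = ⨆ n, partialSups (fun j => ν.withDensity (f j)) n A := by
        simp_rw [withDensity_partialSups hf]
    _ ≤ (⨆ n, ν.withDensity (f n)) A :=
        iSup_le fun n =>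
          (partialSups_le_iff.2 fun j _ => le_iSup (fun j => ν.withDensity (f j)) j :) A

end MeasureTheory

theorem stmt3_general {S : Type*} [MeasurableSpace S] (ν : Measure S)
    (F : Set (S → ℝ≥0∞)) (hmeas : ∀ f ∈ F, Measurable f)
    (f : ℕ → S → ℝ≥0∞) (hmem : ∀ j, f j ∈ F)
    (hsup : ∀ s, (⨆ g ∈ F, g s) = ⨆ j, f j s) :
    (⨆ g ∈ F, ν.withDensity g) = (⨆ j, ν.withDensity (f j)) ∧
    ∀ A : Set S, MeasurableSet A →
      (⨆ g ∈ F, ν.withDensity g) A = ∫⁻ s in A, (⨆ g ∈ F, g s) ∂ν := by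
  have hf : ∀ j, Measurable (f j) := fun j => hmeas _ (hmem j)
  have hsup_fun : (fun s => ⨆ g ∈ F, g s) = ⨆ j, f j := funext fun s => by
    rw [hsup, iSup_apply]
  have hF : ⨆ g ∈ F, ν.withDensity g = ν.withDensity (⨆ j, f j) := by
    refine le_antisymm (iSup₂_le fun g hg => withDensity_mono (.of_forall fun s => ?_)) ?_
    · rw [← hsup_fun]
      exact le_biSup (fun g => g s) hg
    · rw [withDensity_iSup hf]
      exact iSup_le fun j => le_iSup₂ (f := fun g _ => ν.withDensity g) (f j) (hmem j)
  refine ⟨hF.trans (withDensity_iSup hf), fun A hA => ?_⟩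
  rw [hF, withDensity_apply _ hA, hsup_fun]

/-- If `F` is a nonempty family of measurable `[0,∞]`-valued functions containing a sequence
`f j` whose pointwise supremum equals the pointwise supremum of the whole family, then the
supremum of the associated density measures equals the supremum over the sequence, and on every
measurable set it is given by integrating the pointwise supremum of the family. -/
theorem stmt3 {S : Type*} [MeasurableSpace S] (ν : Measure S)
    (F : Set (S → ℝ≥0∞)) (hne : F.Nonempty) (hmeas : ∀ f ∈ F, Measurable f)
    (f : ℕ → S → ℝ≥0∞) (hmem : ∀ j, f j ∈ F)
    (hsup : ∀ s, (⨆ g ∈ F, g s) = ⨆ j, f j s) :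
    (⨆ g ∈ F, ν.withDensity g) = (⨆ j, ν.withDensity (f j)) ∧
    ∀ A : Set S, MeasurableSet A →
      (⨆ g ∈ F, ν.withDensity g) A = ∫⁻ s in A, (⨆ g ∈ F, g s) ∂ν :=
  stmt3_general ν F hmeas f hmem hsup
end

section
/- Let (S,Σ) be a measurable space, let μ_1,…,μ_N be finitely many finite measures on (S,Σ), and let μ̌ = ⨆_{1≤n≤N} μ_n be their supremum measure. Then each μ_n is absolutely continuous with respect to μ̌, and the Radon–Nikodym derivatives satisfy max_{1≤n≤N} (dμ_n/dμ̌)(s) = 1 for μ̌-almost every s ∈ S. -/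
/-!
Write `ν = ⨆ i, μ i` and `fᵢ = dμᵢ/dν`. Since `μᵢ ≤ ν`, each `fᵢ ≤ 1` a.e., so `g = ⨆ i, fᵢ ≤ 1`
a.e. Conversely `μᵢ = ν.withDensity fᵢ ≤ ν.withDensity g` for every `i`, so by minimality of the
supremum `ν ≤ ν.withDensity g ≤ ν.withDensity 1 = ν`. Densities with respect to a σ-finite measure
are unique a.e., hence `g = 1` a.e.
-/

open MeasureTheory
open scoped ENNReal

namespace MeasureTheory.Measure

variable {S ι : Type*} [MeasurableSpace S]

lemma iSup_le_sum (μ : ι → Measure S) : ⨆ i, μ i ≤ sum μ :=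
  iSup_le (le_sum μ)

instance isFiniteMeasure_iSup [Fintype ι] (μ : ι → Measure S) [∀ i, IsFiniteMeasure (μ i)] :
    IsFiniteMeasure (⨆ i, μ i) :=
  isFiniteMeasure_of_le _ ((iSup_le_sum μ).trans_eq (sum_fintype μ))

lemma iSup_le_withDensity_iSup_rnDeriv {ν : Measure S} (μ : ι → Measure S)
    [∀ i, (μ i).HaveLebesgueDecomposition ν] (hμν : ∀ i, μ i ≪ ν) :
    ⨆ i, μ i ≤ ν.withDensity (fun s ↦ ⨆ i, (μ i).rnDeriv ν s) :=
  iSup_le fun i ↦ calc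
    μ i = ν.withDensity ((μ i).rnDeriv ν) := (withDensity_rnDeriv_eq _ _ (hμν i)).symm
    _ ≤ ν.withDensity (fun s ↦ ⨆ i, (μ i).rnDeriv ν s) :=
      withDensity_mono (.of_forall fun s ↦ le_iSup (fun i ↦ (μ i).rnDeriv ν s) i)

theorem iSup_rnDeriv_iSup_ae_eq_one [Countable ι] (μ : ι → Measure S) [SigmaFinite (⨆ i, μ i)] :
    ∀ᵐ s ∂(⨆ i, μ i), ⨆ i, (μ i).rnDeriv (⨆ j, μ j) s = 1 := by
  set ν := ⨆ i, μ i
  have hle (i : ι) : μ i ≤ ν := le_iSup μ i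
  have (i : ι) : SigmaFinite (μ i) := sigmaFinite_of_le ν (hle i)
  have hg_le_one : (fun s ↦ ⨆ i, (μ i).rnDeriv ν s) ≤ᵐ[ν] 1 := by
    filter_upwards [ae_all_iff.2 fun i ↦ rnDeriv_le_one_of_le (hle i)] with s hs
    exact iSup_le hs
  have hdensity : ν.withDensity (fun s ↦ ⨆ i, (μ i).rnDeriv ν s) = ν.withDensity 1 := by
    refine le_antisymm (withDensity_mono hg_le_one) ?_
    rw [withDensity_one]
    exact iSup_le_withDensity_iSup_rnDeriv μ fun i ↦ (hle i).absolutelyContinuous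
  exact (withDensity_eq_iff_of_sigmaFinite
    (Measurable.iSup fun i ↦ (μ i).measurable_rnDeriv ν).aemeasurable aemeasurable_const).1 hdensity

end MeasureTheory.Measure

theorem stmt4_general {S : Type*} [MeasurableSpace S] {N : ℕ}
    (μ : Fin N → Measure S) [∀ n, IsFiniteMeasure (μ n)] :
    (∀ n, μ n ≪ ⨆ m, μ m) ∧
    ∀ᵐ s ∂(⨆ m, μ m), (⨆ n, (μ n).rnDeriv (⨆ m, μ m) s) = 1 :=
  ⟨fun n ↦ (le_iSup μ n).absolutelyContinuous, Measure.iSup_rnDeriv_iSup_ae_eq_one μ⟩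

/-- For finitely many finite measures `μ 0, …, μ (N-1)` with supremum measure `⨆ m, μ m`, each
`μ n` is absolutely continuous with respect to the supremum measure, and the maximum of the
Radon–Nikodym derivatives equals `1` almost everywhere with respect to the supremum measure. -/
theorem stmt4 {S : Type*} [MeasurableSpace S] {N : ℕ} (hN : 0 < N)
    (μ : Fin N → Measure S) [∀ n, IsFiniteMeasure (μ n)] :
    (∀ n, μ n ≪ ⨆ m, μ m) ∧
    ∀ᵐ s ∂(⨆ m, μ m), (⨆ n, (μ n).rnDeriv (⨆ m, μ m) s) = 1 :=
  stmt4_general μ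
end

section
/- Let X be a reflexive separable real Banach space and let B : X → X* be a bounded linear operator which is self-adjoint (⟨Bx, y⟩ = ⟨By, x⟩ for all x, y ∈ X) and positive (⟨Bx, x⟩ ≥ 0 for all x ∈ X). Then there exist a separable real Hilbert space H and a bounded linear operator B^{1/2} : X → H such that ⟨Bx, y⟩ = ⟨B^{1/2}x, B^{1/2}y⟩_H for all x, y ∈ X (that is, B = (B^{1/2})* B^{1/2}, identifying X** with X by reflexivity). -/
/-!
`⟪x, y⟫ := B x y` is a semi-inner product on `X`, and `B x x ≤ ‖B‖ ‖x‖²` makes the identity map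
from `X` to this pre-Hilbert space bounded. Its Hausdorff completion is a Hilbert space `H`, the
identity induces `S : X → H` with `B x y = ⟪S x, S y⟫`, and `H` is separable because `S` has dense
range. To obtain `H : Type`, run the construction on `Shrink X`: a separable metric space injects
into `ℕ → ℝ` via `v ↦ (dist v (d n))ₙ` for a dense sequence `d`.
-/

open scoped RealInnerProductSpace

universe u

/-- `X` as a pre-Hilbert space for the semi-inner product `B`. -/
def WithForm {X : Type u} [NormedAddCommGroup X] [NormedSpace ℝ X]
    (_B : X →L[ℝ] X →L[ℝ] ℝ) : Type u := X

namespace WithForm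

variable {X : Type u} [NormedAddCommGroup X] [NormedSpace ℝ X] {B : X →L[ℝ] X →L[ℝ] ℝ}

instance : AddCommGroup (WithForm B) := inferInstanceAs (AddCommGroup X)

instance : Module ℝ (WithForm B) := inferInstanceAs (Module ℝ X)

variable (B) in
def equiv : X ≃ₗ[ℝ] WithForm B := LinearEquiv.refl ℝ X

noncomputable abbrev innerCore (hsym : ∀ x y : X, B x y = B y x) (hpos : ∀ x : X, 0 ≤ B x x) :
    PreInnerProductSpace.Core ℝ (WithForm B) where
  inner x y := B ((equiv B).symm x) ((equiv B).symm y)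
  conj_inner_symm x y := hsym _ _
  re_inner_nonneg x := hpos _
  add_left x y z := by simp
  smul_left x y r := by simp

end WithForm

open WithForm in
theorem exists_completeSpace_denseRange_inner_eq {X : Type u} [NormedAddCommGroup X]
    [NormedSpace ℝ X] (B : X →L[ℝ] X →L[ℝ] ℝ)
    (hsym : ∀ x y : X, B x y = B y x) (hpos : ∀ x : X, 0 ≤ B x x) :
    ∃ (H : Type u) (_ : NormedAddCommGroup H) (_ : InnerProductSpace ℝ H),
      CompleteSpace H ∧ ∃ S : X →L[ℝ] H, DenseRange S ∧ ∀ x y : X, B x y = ⟪S x, S y⟫ := by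
  let core := innerCore hsym hpos
  let : SeminormedAddCommGroup (WithForm B) :=
    InnerProductSpace.Core.toSeminormedAddCommGroup (𝕜 := ℝ)
  let : InnerProductSpace ℝ (WithForm B) := InnerProductSpace.ofCore core
  have hinner : ∀ x y : X, ⟪equiv B x, equiv B y⟫ = B x y := fun _ _ => rfl
  have hbound : ∀ x : X, ‖equiv B x‖ ≤ √‖B‖ * ‖x‖ := by
    intro x
    rw [norm_eq_sqrt_real_inner, hinner, ← Real.sqrt_mul_self (norm_nonneg x),
      ← Real.sqrt_mul (norm_nonneg B)]
    refine Real.sqrt_le_sqrt ?_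
    calc B x x ≤ ‖B x x‖ := le_abs_self _
      _ ≤ ‖B‖ * ‖x‖ * ‖x‖ := B.le_opNorm₂ x x
      _ = ‖B‖ * (‖x‖ * ‖x‖) := mul_assoc _ _ _
  let J : X →L[ℝ] WithForm B := (equiv B).toLinearMap.mkContinuous _ hbound
  refine ⟨UniformSpace.Completion (WithForm B), inferInstance, inferInstance, inferInstance,
    UniformSpace.Completion.toComplL ∘L J, ?_, fun x y => ?_⟩
  · exact UniformSpace.Completion.denseRange_coe.comp (equiv B).surjective.denseRange
      (UniformSpace.Completion.continuous_coe _)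
  · simp [J, UniformSpace.Completion.inner_coe, hinner]

theorem small_of_separableSpace (V : Type*) [MetricSpace V] [TopologicalSpace.SeparableSpace V] :
    Small.{0} V := by
  rcases isEmpty_or_nonempty V with _ | _
  · infer_instance
  obtain ⟨d, hd⟩ := TopologicalSpace.exists_dense_seq V
  refine small_of_injective (f := fun v n => dist v (d n)) fun v w hvw => ?_
  have h : dist v = dist w :=
    (continuous_const.dist continuous_id).ext_on hd (continuous_const.dist continuous_id)
      (Set.forall_mem_range.2 (congrFun hvw))
  simpa [eq_comm] using congrFun h v

theorem stmt6_general {X : Type*} [NormedAddCommGroup X] [NormedSpace ℝ X]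
    [TopologicalSpace.SeparableSpace X]
    (B : X →L[ℝ] (X →L[ℝ] ℝ))
    (hsym : ∀ x y : X, B x y = B y x) (hpos : ∀ x : X, 0 ≤ B x x) :
    ∃ (H : Type) (_ : NormedAddCommGroup H) (_ : InnerProductSpace ℝ H),
      CompleteSpace H ∧ TopologicalSpace.SeparableSpace H ∧
      ∃ S : X →L[ℝ] H, ∀ x y : X, B x y = ⟪S x, S y⟫ := by
  have := small_of_separableSpace X
  let e := Shrink.continuousLinearEquiv ℝ X
  let e' : Shrink X →L[ℝ] X := e
  obtain ⟨H, _, _, hH, S, hS, hSB⟩ :=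
    exists_completeSpace_denseRange_inner_eq (B.bilinearComp e' e')
      (fun x y => hsym (e x) (e y)) (fun x => hpos (e x))
  let T : X →L[ℝ] H := S ∘L (e.symm : X →L[ℝ] Shrink X)
  have hT : DenseRange T := hS.comp e.symm.surjective.denseRange S.continuous
  refine ⟨H, _, _, hH, hT.separableSpace T.continuous, T, fun x y => ?_⟩
  simpa [T, e'] using hSB (e.symm x) (e.symm y)

/-- For a positive self-adjoint bounded operator `B` from a reflexive separable real Banach
space `X` into its dual, there exist a separable real Hilbert space `H` and a bounded operator
`S : X → H` (a square root `B^{1/2}` of `B`) such that `⟨Bx, y⟩ = ⟨Sx, Sy⟩_H` for all `x, y`. -/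
theorem stmt6 {X : Type*} [NormedAddCommGroup X] [NormedSpace ℝ X] [CompleteSpace X]
    [TopologicalSpace.SeparableSpace X]
    (hrefl : Function.Surjective (NormedSpace.inclusionInDoubleDual ℝ X))
    (B : X →L[ℝ] (X →L[ℝ] ℝ))
    (hsym : ∀ x y : X, B x y = B y x) (hpos : ∀ x : X, 0 ≤ B x x) :
    ∃ (H : Type) (_ : NormedAddCommGroup H) (_ : InnerProductSpace ℝ H),
      CompleteSpace H ∧ TopologicalSpace.SeparableSpace H ∧
      ∃ S : X →L[ℝ] H, ∀ x y : X, B x y = ⟪S x, S y⟫ :=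
  stmt6_general B hsym hpos
end

section
/- Let H be a real Hilbert space, let H₀ ⊆ H be a finite-dimensional subspace, and let F : H → H be a bounded self-adjoint operator with ⟨Fh, h⟩ ≥ 0 for all h ∈ H. Let P denote the orthogonal projection of H onto the (finite-dimensional, hence closed) subspace F(H₀). Then there exist bounded linear operators P̃ and L on H such that P̃ ∘ F = F ∘ P, P̃ ∘ P̃ = P̃ (P̃ is a projection), and L ∘ F = P. -/
open scoped RealInnerProductSpace

/-!
Write `K = F(H₀)`. For a symmetric `F`, `(F H₀)ᗮ = F⁻¹(H₀ᗮ)`, so the projection `P` onto `K`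
vanishes wherever `x ↦ P_{H₀}(F x)` does. Hence `P` factors linearly through the
finite-dimensional space `H₀`, as `P = G ∘ P_{H₀} ∘ F`, and `L := G ∘ P_{H₀}` is bounded with
`L ∘ F = P`. Then `P̃ := F ∘ P ∘ L` works: `P̃ ∘ F = F ∘ P ∘ P = F ∘ P` and
`P̃ ∘ P̃ = F ∘ P ∘ (L ∘ F) ∘ P ∘ L = P̃`.
-/

theorem LinearMap.exists_comp_eq_of_ker_le {K V V' V'' : Type*} [DivisionRing K]
    [AddCommGroup V] [Module K V] [AddCommGroup V'] [Module K V'] [AddCommGroup V'']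
    [Module K V''] (f : V →ₗ[K] V') (g : V →ₗ[K] V'') (hfg : ker f ≤ ker g) :
    ∃ h : V' →ₗ[K] V'', h ∘ₗ f = g := by
  obtain ⟨h, hh⟩ :=
    LinearMap.exists_extend ((ker f).liftQ g hfg ∘ₗ f.quotKerEquivRange.symm.toLinearMap)
  refine ⟨h, LinearMap.ext fun v => ?_⟩
  have hv := congr($hh ⟨f v, mem_range_self f v⟩)
  rwa [comp_apply, comp_apply, LinearEquiv.coe_coe, quotKerEquivRange_symm_apply_image,
    Submodule.mkQ_apply, Submodule.liftQ_apply] at hv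

theorem LinearMap.IsSymmetric.orthogonal_map {𝕜 E : Type*} [RCLike 𝕜] [NormedAddCommGroup E]
    [InnerProductSpace 𝕜 E] {T : E →ₗ[𝕜] E} (hT : T.IsSymmetric) (U : Submodule 𝕜 E) :
    (U.map T)ᗮ = Uᗮ.comap T := by
  ext x
  simp only [Submodule.mem_orthogonal, Submodule.mem_comap, Submodule.mem_map,
    forall_exists_index, and_imp, forall_apply_eq_imp_iff₂, hT _ x]

theorem exists_comp_eq_starProjection_map {𝕜 E : Type*} [RCLike 𝕜] [NormedAddCommGroup E]
    [InnerProductSpace 𝕜 E] {F : E →L[𝕜] E} (hF : (F : E →ₗ[𝕜] E).IsSymmetric)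
    (U : Submodule 𝕜 E) [FiniteDimensional 𝕜 U] :
    ∃ L : E →L[𝕜] E, L ∘L F = (U.map (F : E →ₗ[𝕜] E)).starProjection := by
  have hker : LinearMap.ker (U.orthogonalProjectionOnto.toLinearMap ∘ₗ (F : E →ₗ[𝕜] E)) ≤
      LinearMap.ker (U.map (F : E →ₗ[𝕜] E)).starProjection.toLinearMap := by
    intro x hx
    have hFx : F x ∈ Uᗮ := Submodule.orthogonalProjectionOnto_eq_zero_iff.mp hx
    have hx' : x ∈ (U.map (F : E →ₗ[𝕜] E))ᗮ := by rw [hF.orthogonal_map]; exact hFx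
    simpa using hx'
  obtain ⟨G, hG⟩ := LinearMap.exists_comp_eq_of_ker_le _ _ hker
  exact ⟨G.toContinuousLinearMap ∘L U.orthogonalProjectionOnto,
    ContinuousLinearMap.ext fun x => congr($hG x)⟩

theorem mul_mul_mul_eq_of_mul_eq {M : Type*} [Semigroup M] {f p l : M}
    (hp : IsIdempotentElem p) (hlf : l * f = p) : f * p * l * f = f * p := by
  rw [mul_assoc, hlf, mul_assoc, hp.eq]

theorem IsIdempotentElem.mul_mul_of_mul_eq {M : Type*} [Semigroup M] {f p l : M}
    (hp : IsIdempotentElem p) (hlf : l * f = p) : IsIdempotentElem (f * p * l) := by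
  change f * p * l * (f * p * l) = f * p * l
  rw [← mul_assoc, ← mul_assoc, mul_mul_mul_eq_of_mul_eq hp hlf, mul_assoc f, hp.eq]

theorem stmt8_general {H : Type*} [NormedAddCommGroup H] [InnerProductSpace ℝ H]
    (H₀ : Submodule ℝ H) [FiniteDimensional ℝ H₀]
    (F : H →L[ℝ] H)
    (hsa : ∀ h g : H, ⟪F h, g⟫ = ⟪F g, h⟫) :
    ∃ Pt L : H →L[ℝ] H,
      (∀ h, Pt (F h) = F ((Submodule.map (F : H →ₗ[ℝ] H) H₀).subtypeL
          (Submodule.orthogonalProjectionOnto (Submodule.map (F : H →ₗ[ℝ] H) H₀) h))) ∧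
      (∀ h, Pt (Pt h) = Pt h) ∧
      (∀ h, L (F h) = (Submodule.map (F : H →ₗ[ℝ] H) H₀).subtypeL
          (Submodule.orthogonalProjectionOnto (Submodule.map (F : H →ₗ[ℝ] H) H₀) h)) := by
  set P := (H₀.map (F : H →ₗ[ℝ] H)).starProjection
  have hF : (F : H →ₗ[ℝ] H).IsSymmetric := fun h g => by
    rw [ContinuousLinearMap.coe_coe, hsa, real_inner_comm]
  obtain ⟨L, hLF⟩ := exists_comp_eq_starProjection_map hF H₀
  have hP : IsIdempotentElem P := Submodule.isIdempotentElem_starProjection _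
  refine ⟨F * P * L, L, fun h => ?_, fun h => ?_, fun h => congr($hLF h)⟩
  · exact congr($(mul_mul_mul_eq_of_mul_eq hP hLF) h)
  · exact congr($((hP.mul_mul_of_mul_eq hLF).eq) h)

/-- For a positive self-adjoint bounded operator `F` on a real Hilbert space `H` and a
finite-dimensional subspace `H₀`, with `P` the orthogonal projection onto `F(H₀)`, there exist
bounded operators `P̃` and `L` on `H` with `P̃ ∘ F = F ∘ P`, `P̃` a projection, and `L ∘ F = P`. -/
theorem stmt8 {H : Type*} [NormedAddCommGroup H] [InnerProductSpace ℝ H] [CompleteSpace H]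
    (H₀ : Submodule ℝ H) [FiniteDimensional ℝ H₀]
    (F : H →L[ℝ] H)
    (hsa : ∀ h g : H, ⟪F h, g⟫ = ⟪F g, h⟫)
    (hpos : ∀ h : H, 0 ≤ ⟪F h, h⟫) :
    ∃ Pt L : H →L[ℝ] H,
      (∀ h, Pt (F h) = F ((Submodule.map (F : H →ₗ[ℝ] H) H₀).subtypeL
          (Submodule.orthogonalProjectionOnto (Submodule.map (F : H →ₗ[ℝ] H) H₀) h))) ∧
      (∀ h, Pt (Pt h) = Pt h) ∧
      (∀ h, L (F h) = (Submodule.map (F : H →ₗ[ℝ] H) H₀).subtypeL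
          (Submodule.orthogonalProjectionOnto (Submodule.map (F : H →ₗ[ℝ] H) H₀) h)) :=
  stmt8_general H₀ F hsa
end

section
/- Let (S,Σ) be a measurable space, let H be a separable real Hilbert space, and let H₀ ⊆ H be a finite-dimensional subspace. Let F : S → 𝓛(H) be a function with values in the bounded operators on H such that (i) for every h ∈ H the map s ↦ F(s)h is strongly measurable, and (ii) for every s ∈ S, F(s) is self-adjoint and ⟨F(s)h, h⟩ ≥ 0 for all h ∈ H. For each s ∈ S let P(s) be the orthogonal projection of H onto F(s)(H₀). Then there exist functions P̃, L : S → 𝓛(H) such that for every h ∈ H the maps s ↦ P̃(s)h and s ↦ L(s)h are strongly measurable, and for every s ∈ S one has P̃(s) ∘ F(s) = F(s) ∘ P(s), L(s) ∘ F(s) = P(s), and P̃(s) ∘ P̃(s) = P̃(s). -/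
/-!
Let `v` be a basis of `H₀` and `w = F(s) ∘ v`, so that `F(s)(H₀) = span w`. If `M` is any
generalized inverse of the Gram matrix `G` of `w` (`G M G = G`), the orthogonal projection onto
`span w` is `x ↦ ∑ᵢ (M ⟪w, x⟫)ᵢ wᵢ`. Self-adjointness turns `⟪wⱼ, h⟫` into `⟪vⱼ, F(s) h⟫`, so
`L(s) x = ∑ᵢ (M ⟪v, x⟫)ᵢ wᵢ` satisfies `L(s) F(s) = P(s)`, and `P̃(s) = F(s) L(s)` works.
Measurability in `s` comes from taking for `M` the Moore–Penrose inverse of `G`, which is the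
pointwise limit of the Tikhonov regularizations `(G² + ε)⁻¹ G`.
-/

open Filter Topology MeasureTheory Matrix Submodule Set
open scoped RealInnerProductSpace

lemma tendsto_inv_sq_add_inv_succ_mul (x : ℝ) :
    Tendsto (fun k : ℕ => (x ^ 2 + (k + 1 : ℝ)⁻¹)⁻¹ * x) atTop (𝓝 x⁻¹) := by
  rcases eq_or_ne x 0 with rfl | hx
  · simp
  · have hε : Tendsto (fun k : ℕ => (k + 1 : ℝ)⁻¹) atTop (𝓝 0) := by
      simpa using tendsto_one_div_add_atTop_nhds_zero_nat (𝕜 := ℝ)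
    have := ((tendsto_const_nhds (x := x ^ 2)).add hε).inv₀ (by positivity) |>.mul_const x
    rw [add_zero] at this
    convert this using 2
    field_simp

namespace Matrix

variable {m n 𝕜 α : Type*}

instance [MeasurableSpace α] : MeasurableSpace (Matrix m n α) :=
  inferInstanceAs (MeasurableSpace (m → n → α))

instance [TopologicalSpace α] [MeasurableSpace α] [BorelSpace α] [SecondCountableTopology α]
    [Countable m] [Countable n] : BorelSpace (Matrix m n α) :=
  inferInstanceAs (BorelSpace (m → n → α))

instance [TopologicalSpace α] [SecondCountableTopology α] [Countable m] [Countable n] :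
    SecondCountableTopology (Matrix m n α) :=
  inferInstanceAs (SecondCountableTopology (m → n → α))

variable [RCLike 𝕜] [Fintype n] [DecidableEq n] {A : Matrix n n 𝕜}

lemma continuousOn_spectrum (A : Matrix n n 𝕜) (f : ℝ → ℝ) : ContinuousOn f (spectrum ℝ A) :=
  (Set.toFinite _).continuousOn f

/-- Since `0⁻¹ = 0`, `cfc (·⁻¹) A` is the Moore–Penrose inverse of `A`. -/
lemma IsHermitian.mul_cfc_inv_mul_self (hA : A.IsHermitian) :
    A * cfc (·⁻¹ : ℝ → ℝ) A * A = A := by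
  have hc := continuousOn_spectrum A
  calc A * cfc (·⁻¹ : ℝ → ℝ) A * A = cfc (fun x : ℝ => x * x⁻¹ * x) A := by
        rw [cfc_mul _ _ A (hc _) (hc _), cfc_mul _ _ A (hc _) (hc _),
          cfc_id' ℝ A hA.isSelfAdjoint]
    _ = A := by simp only [mul_inv_mul_cancel, cfc_id' ℝ A hA.isSelfAdjoint]

lemma IsHermitian.tendsto_cfc (hA : A.IsHermitian) {ι : Type*} {l : Filter ι} {f : ι → ℝ → ℝ}
    {g : ℝ → ℝ} (hfg : ∀ x ∈ spectrum ℝ A, Tendsto (fun k => f k x) l (𝓝 (g x))) :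
    Tendsto (fun k => cfc (f k) A) l (𝓝 (cfc g A)) := by
  simp only [hA.cfc_eq, IsHermitian.cfc, Unitary.conjStarAlgAut_apply]
  have hcont : Continuous fun d : n → ℝ => (hA.eigenvectorUnitary : Matrix n n 𝕜) *
      diagonal (RCLike.ofReal ∘ d) * star (hA.eigenvectorUnitary : Matrix n n 𝕜) := by
    fun_prop
  exact (hcont.tendsto _).comp <|
    tendsto_pi_nhds.2 fun i => hfg _ (hA.eigenvalues_mem_spectrum_real i)

lemma IsHermitian.cfc_inv_sq_add_mul (hA : A.IsHermitian) {ε : ℝ} (hε : 0 < ε) :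
    cfc (fun x : ℝ => (x ^ 2 + ε)⁻¹ * x) A = (A ^ 2 + ε • 1)⁻¹ * A := by
  have hc := continuousOn_spectrum A
  have hA' := hA.isSelfAdjoint
  have hinv : cfc (fun x : ℝ => (x ^ 2 + ε)⁻¹) A =
      Ring.inverse (cfc (fun x : ℝ => x ^ 2 + ε) A) :=
    cfc_inv _ A (fun x _ => by positivity) (hc _) hA'
  rw [cfc_mul _ _ A (hc _) (hc _), hinv, cfc_add_const _ _ A (hc _) hA', cfc_pow _ _ A (hc _) hA',
    cfc_id' ℝ A hA', nonsing_inv_eq_ringInverse, Algebra.algebraMap_eq_smul_one]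

variable [MeasurableSpace 𝕜] [BorelSpace 𝕜]

lemma measurable_inv : Measurable fun A : Matrix n n 𝕜 => A⁻¹ := by
  simp_rw [inv_def, Ring.inverse_eq_inv']
  exact (continuous_id.matrix_det.measurable.inv).smul continuous_id.matrix_adjugate.measurable

theorem measurable_cfc_inv {S : Type*} [MeasurableSpace S] {G : S → Matrix n n 𝕜}
    (hG : Measurable G) (hGh : ∀ s, (G s).IsHermitian) :
    Measurable fun s => cfc (·⁻¹ : ℝ → ℝ) (G s) := by
  have : TopologicalSpace.PseudoMetrizableSpace (Matrix n n 𝕜) :=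
    inferInstanceAs (TopologicalSpace.PseudoMetrizableSpace (n → n → 𝕜))
  refine measurable_of_tendsto_metrizable
    (f := fun (k : ℕ) s => (G s ^ 2 + (k + 1 : ℝ)⁻¹ • 1)⁻¹ * G s) (fun k => ?_) ?_
  · have : Continuous fun A : Matrix n n 𝕜 => A ^ 2 + (k + 1 : ℝ)⁻¹ • 1 := by fun_prop
    exact (measurable_inv.comp (this.measurable.comp hG)).mul hG
  · refine tendsto_pi_nhds.2 fun s => ?_
    have := IsHermitian.tendsto_cfc (hGh s)
      (f := fun (k : ℕ) (x : ℝ) => (x ^ 2 + (k + 1 : ℝ)⁻¹)⁻¹ * x)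
      fun x _ => tendsto_inv_sq_add_inv_succ_mul x
    exact this.congr fun k => IsHermitian.cfc_inv_sq_add_mul (hGh s) (by positivity)

end Matrix

theorem stronglyMeasurable_apply_of_continuous_of_stronglyMeasurable {S E F : Type*}
    [MeasurableSpace S] [TopologicalSpace E] [TopologicalSpace.MetrizableSpace E]
    [SecondCountableTopology E] [TopologicalSpace F] [TopologicalSpace.PseudoMetrizableSpace F]
    {u : S → E → F} (hcont : ∀ s, Continuous (u s))
    (hmeas : ∀ x, StronglyMeasurable fun s => u s x) {g : S → E} (hg : StronglyMeasurable g) :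
    StronglyMeasurable fun s => u s (g s) := by
  borelize E
  exact (stronglyMeasurable_uncurry_of_continuous_of_stronglyMeasurable (u := fun x s => u s x)
    hcont hmeas).comp_measurable (hg.measurable.prodMk measurable_id)

lemma Module.Basis.span_range_map {R M N ι : Type*} [Ring R] [AddCommGroup M] [Module R M]
    [AddCommGroup N] [Module R N] {K : Submodule R M} (b : Module.Basis ι R K) (f : M →ₗ[R] N) :
    span R (range fun i => f (b i)) = K.map f := by
  have : (range fun i => f (b i)) = (f ∘ₗ K.subtype) '' range b := by rw [← range_comp]; rfl
  rw [this, span_image, b.span_eq, map_comp, map_subtype_top]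

section GramProjection

variable {ι E : Type*} [Fintype ι] [NormedAddCommGroup E] [InnerProductSpace ℝ E]

lemma gram_mulVec_apply (w : ι → E) (b : ι → ℝ) (j : ι) :
    (gram ℝ w *ᵥ b) j = ⟪w j, ∑ i, b i • w i⟫ := by
  simp [mulVec, dotProduct, inner_sum, real_inner_smul_right, mul_comm]

lemma sum_smul_eq_zero_of_gram_mulVec_eq_zero {w : ι → E} {z : ι → ℝ}
    (hz : gram ℝ w *ᵥ z = 0) : ∑ i, z i • w i = 0 := by
  rw [← inner_self_eq_zero (𝕜 := ℝ), ← star_dotProduct_gram_mulVec, hz, dotProduct_zero]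

theorem starProjection_eq_sum_of_gram_mul_mul_gram {K : Submodule ℝ E}
    [K.HasOrthogonalProjection] {w : ι → E} (hK : span ℝ (range w) = K) {M : Matrix ι ι ℝ}
    (hM : gram ℝ w * M * gram ℝ w = gram ℝ w) (x : E) :
    K.starProjection x = ∑ i, (M *ᵥ fun j => ⟪w j, x⟫) i • w i := by
  obtain ⟨a, ha⟩ := (mem_span_range_iff_exists_fun ℝ).1
    (by rw [hK]; exact K.starProjection_apply_mem x)
  have hw : ∀ j, w j ∈ K := fun j => hK ▸ subset_span (mem_range_self j)
  have hcoeff : (fun j => ⟪w j, x⟫) = gram ℝ w *ᵥ a := by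
    ext j
    rw [gram_mulVec_apply, ha, ← sub_eq_zero, ← inner_sub_right]
    exact K.inner_right_of_mem_orthogonal (hw j) (K.sub_starProjection_mem_orthogonal x)
  have hker : gram ℝ w *ᵥ (a - M *ᵥ (gram ℝ w *ᵥ a)) = 0 := by
    rw [mulVec_sub, mulVec_mulVec, mulVec_mulVec, hM, sub_self]
  have := sum_smul_eq_zero_of_gram_mulVec_eq_zero hker
  simp only [Pi.sub_apply, sub_smul, Finset.sum_sub_distrib, sub_eq_zero] at this
  rw [← ha, hcoeff, this]

noncomputable def matrixOperator (u w : ι → E) (M : Matrix ι ι ℝ) : E →L[ℝ] E :=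
  ∑ i, ∑ j, M i j • (innerSL ℝ (u j)).smulRight (w i)

lemma matrixOperator_apply (u w : ι → E) (M : Matrix ι ι ℝ) (x : E) :
    matrixOperator u w M x = ∑ i, (M *ᵥ fun j => ⟪u j, x⟫) i • w i := by
  simp [matrixOperator, mulVec, dotProduct, Finset.sum_smul, smul_smul]

lemma matrixOperator_apply_of_isSymmetric {T : E →L[ℝ] E} (hT : (T : E →ₗ[ℝ] E).IsSymmetric)
    (u w : ι → E) (M : Matrix ι ι ℝ) (x : E) :
    matrixOperator u w M (T x) = matrixOperator (T ∘ u) w M x := by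
  have hadj j : ⟪u j, T x⟫ = ⟪T (u j), x⟫ := (hT (u j) x).symm
  simp only [matrixOperator_apply, Function.comp_apply, hadj]

lemma matrixOperator_apply_mem {K : Submodule ℝ E} (u : ι → E) {w : ι → E} (hw : ∀ i, w i ∈ K)
    (M : Matrix ι ι ℝ) (x : E) : matrixOperator u w M x ∈ K := by
  rw [matrixOperator_apply]
  exact K.sum_mem fun i _ => K.smul_mem _ (hw i)

lemma stronglyMeasurable_matrixOperator_apply {S : Type*} [MeasurableSpace S] (u : ι → E)
    {w : S → ι → E} {M : S → Matrix ι ι ℝ} (hw : ∀ i, StronglyMeasurable fun s => w s i)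
    (hM : ∀ i j, Measurable fun s => M s i j) (x : E) :
    StronglyMeasurable fun s => matrixOperator u (w s) (M s) x := by
  simp only [matrixOperator_apply, mulVec, dotProduct]
  refine Finset.stronglyMeasurable_fun_sum _ fun i _ => ?_
  exact (Finset.measurable_sum _ fun j _ => (hM i j).mul_const _).stronglyMeasurable.smul (hw i)

end GramProjection

theorem stmt9_general {S : Type*} [MeasurableSpace S] {H : Type*} [NormedAddCommGroup H]
    [InnerProductSpace ℝ H] [SecondCountableTopology H]
    (H₀ : Submodule ℝ H) [FiniteDimensional ℝ H₀]
    (F : S → H →L[ℝ] H)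
    (hmeas : ∀ h : H, StronglyMeasurable fun s => F s h)
    (hsa : ∀ s, ∀ h g : H, ⟪F s h, g⟫ = ⟪F s g, h⟫) :
    ∃ Pt L : S → H →L[ℝ] H,
      (∀ h : H, StronglyMeasurable fun s => Pt s h) ∧
      (∀ h : H, StronglyMeasurable fun s => L s h) ∧
      (∀ s, ∀ h, Pt s (F s h) = F s ((Submodule.map (F s : H →ₗ[ℝ] H) H₀).subtypeL
          (Submodule.orthogonalProjectionOnto (Submodule.map (F s : H →ₗ[ℝ] H) H₀) h))) ∧
      (∀ s, ∀ h, L s (F s h) = (Submodule.map (F s : H →ₗ[ℝ] H) H₀).subtypeL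
          (Submodule.orthogonalProjectionOnto (Submodule.map (F s : H →ₗ[ℝ] H) H₀) h)) ∧
      (∀ s, ∀ h, Pt s (Pt s h) = Pt s h) := by
  classical
  let b := Module.finBasis ℝ H₀
  let v i : H := b i
  let w s i : H := F s (v i)
  let M s := cfc (·⁻¹ : ℝ → ℝ) (gram ℝ (w s))
  let L s := matrixOperator v (w s) (M s)
  have hsymm s : (F s : H →ₗ[ℝ] H).IsSymmetric := fun h g => by
    rw [ContinuousLinearMap.coe_coe, hsa, real_inner_comm]
  have hproj s h : L s (F s h) = (H₀.map (F s : H →ₗ[ℝ] H)).starProjection h := by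
    rw [matrixOperator_apply_of_isSymmetric (hsymm s), starProjection_eq_sum_of_gram_mul_mul_gram
      (b.span_range_map _) (isHermitian_gram ℝ (w s)).mul_cfc_inv_mul_self, matrixOperator_apply]
    rfl
  have hM : Measurable M := measurable_cfc_inv
    (measurable_pi_lambda _ fun i => measurable_pi_lambda _ fun j =>
      ((hmeas (v i)).inner (hmeas (v j))).measurable)
    fun s => isHermitian_gram ℝ (w s)
  have hL h : StronglyMeasurable fun s => L s h :=
    stronglyMeasurable_matrixOperator_apply v (fun i => hmeas (v i))
      (fun i j => (measurable_pi_apply j).comp ((measurable_pi_apply i).comp hM)) h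
  refine ⟨fun s => F s ∘L L s, L, fun h => ?_, hL, fun s h => congrArg (F s) (hproj s h), hproj,
    fun s h => ?_⟩
  · exact stronglyMeasurable_apply_of_continuous_of_stronglyMeasurable (fun s => (F s).continuous)
      hmeas (hL h)
  · change F s (L s (F s (L s h))) = F s (L s h)
    have hmem : L s h ∈ H₀.map (F s : H →ₗ[ℝ] H) :=
      matrixOperator_apply_mem v (fun i => mem_map_of_mem (b i).2) _ _
    rw [hproj, starProjection_eq_self_iff.2 hmem]

/-- Measurable-selection version: for an `H`-strongly measurable family `F s` of positive
self-adjoint operators on a separable real Hilbert space `H` and a finite-dimensional subspace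
`H₀`, with `P s` the orthogonal projection onto `F(s)(H₀)`, there exist `H`-strongly measurable
families `P̃ s` and `L s` with `P̃ s ∘ F s = F s ∘ P s`, `L s ∘ F s = P s`, and each `P̃ s` a
projection. -/
theorem stmt9 {S : Type*} [MeasurableSpace S] {H : Type*} [NormedAddCommGroup H]
    [InnerProductSpace ℝ H] [CompleteSpace H] [SecondCountableTopology H]
    (H₀ : Submodule ℝ H) [FiniteDimensional ℝ H₀]
    (F : S → H →L[ℝ] H)
    (hmeas : ∀ h : H, StronglyMeasurable fun s => F s h)
    (hsa : ∀ s, ∀ h g : H, ⟪F s h, g⟫ = ⟪F s g, h⟫)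
    (hpos : ∀ s, ∀ h : H, 0 ≤ ⟪F s h, h⟫) :
    ∃ Pt L : S → H →L[ℝ] H,
      (∀ h : H, StronglyMeasurable fun s => Pt s h) ∧
      (∀ h : H, StronglyMeasurable fun s => L s h) ∧
      (∀ s, ∀ h, Pt s (F s h) = F s ((Submodule.map (F s : H →ₗ[ℝ] H) H₀).subtypeL
          (Submodule.orthogonalProjectionOnto (Submodule.map (F s : H →ₗ[ℝ] H) H₀) h))) ∧
      (∀ s, ∀ h, L s (F s h) = (Submodule.map (F s : H →ₗ[ℝ] H) H₀).subtypeL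
          (Submodule.orthogonalProjectionOnto (Submodule.map (F s : H →ₗ[ℝ] H) H₀) h)) ∧
      (∀ s, ∀ h, Pt s (Pt s h) = Pt s h) :=
  stmt9_general H₀ F hmeas hsa
end
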